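/- Let t̂, f̂, σ_t, σ_f be real numbers with 0 < σ_t < t̂ and 0 < σ_f < f̂, and let Δ = sup_{η ∈ (0,1)} (UB(η) − LB(η)) be the maximal uncertainty. With CV_TPR = σ_t/t̂ and CV_FPR = σ_f/f̂, the following identity holds: ((1 − CV_FPR)/(1 + CV_FPR)) · ((1 − CV_TPR)/(1 + CV_TPR)) = ((1 − Δ)/(1 + Δ))². -/

import Mathlib

open Set

/-- Precision as a function of positive class prevalence `η`, TPR `t` and FPR `f`. -/
noncomputable def Prec (η t f : ℝ) : ℝ := η * t / (η * t + (1 - η) * f)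

/-- Upper bound `UB(η)`: supremum of precision over the confidence intervals. -/
noncomputable def UB (th σt fh σf η : ℝ) : ℝ :=
  sSup {p : ℝ | ∃ t ∈ Ioo (th - σt) (th + σt), ∃ f ∈ Ioo (fh - σf) (fh + σf), p = Prec η t f}

/-- Lower bound `LB(η)`: infimum of precision over the confidence intervals. -/
noncomputable def LB (th σt fh σf η : ℝ) : ℝ :=
  sInf {p : ℝ | ∃ t ∈ Ioo (th - σt) (th + σt), ∃ f ∈ Ioo (fh - σf) (fh + σf), p = Prec η t f}

/-- The maximal uncertainty `Δ = sup_{η ∈ (0,1)} (UB(η) - LB(η))`. -/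
noncomputable def Delta (th σt fh σf : ℝ) : ℝ :=
  sSup {d : ℝ | ∃ η ∈ Ioo (0:ℝ) 1, d = UB th σt fh σf η - LB th σt fh σf η}

/-!
Writing `k = (1 - η) / η` for the odds against the positive class,
`Prec η t f = 1 / (1 + k f / t)`, which increases in `t` and decreases in `f`. Hence `UB(η)` and
`LB(η)` are the precisions at the corners `(t̂ + σ_t, f̂ - σ_f)` and `(t̂ - σ_t, f̂ + σ_f)` of the
box, and with `x² = (f̂ - σ_f) / (t̂ + σ_t)`, `y² = (f̂ + σ_f) / (t̂ - σ_t)` the gap is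
`1 / (1 + k x²) - 1 / (1 + k y²)`. The inequality `2 k x y ≤ 1 + (k x y)²` bounds it by
`(y - x) / (y + x)`, with equality at `k = 1 / (x y)`, so `Δ = (y - x) / (y + x)` and
`(1 - Δ) / (1 + Δ) = x / y`, whose square is the product of the two CV ratios
`(f̂ - σ_f) / (f̂ + σ_f)` and `(t̂ - σ_t) / (t̂ + σ_t)`.
-/

lemma Prec_eq_one_div {η t f : ℝ} (hη : η ≠ 0) (ht : t ≠ 0) :
    Prec η t f = 1 / (1 + (1 - η) / η * (f / t)) := by
  unfold Prec
  field_simp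

lemma Prec_le_Prec {η t f t' f' : ℝ} (hη : η ∈ Ioo (0 : ℝ) 1) (ht : 0 < t) (hf' : 0 < f')
    (htt' : t ≤ t') (hf'f : f' ≤ f) : Prec η t f ≤ Prec η t' f' := by
  have hk : 0 ≤ (1 - η) / η := div_nonneg (by linarith [hη.2]) hη.1.le
  rw [Prec_eq_one_div hη.1.ne' ht.ne', Prec_eq_one_div hη.1.ne' (by linarith : t' ≠ 0)]
  apply one_div_le_one_div_of_le
  · exact add_pos_of_pos_of_nonneg one_pos (mul_nonneg hk (div_nonneg hf'.le (by linarith)))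
  · exact add_le_add_right (mul_le_mul_of_nonneg_left (div_le_div₀ (by linarith) hf'f ht htt') hk) 1

lemma Prec_mem_closure {th σt fh σf η t f : ℝ} (hσt : 0 < σt) (hσf : 0 < σf)
    (ht : t ∈ Icc (th - σt) (th + σt)) (hf : f ∈ Icc (fh - σf) (fh + σf))
    (hden : η * t + (1 - η) * f ≠ 0) :
    Prec η t f ∈ closure
      {p : ℝ | ∃ t ∈ Ioo (th - σt) (th + σt), ∃ f ∈ Ioo (fh - σf) (fh + σf), p = Prec η t f} := by
  have himage : {p : ℝ | ∃ t ∈ Ioo (th - σt) (th + σt), ∃ f ∈ Ioo (fh - σf) (fh + σf),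
      p = Prec η t f} =
      (fun x : ℝ × ℝ => Prec η x.1 x.2) ''
        (Ioo (th - σt) (th + σt) ×ˢ Ioo (fh - σf) (fh + σf)) := by
    ext p
    simp [eq_comm]
  rw [himage]
  refine ContinuousWithinAt.mem_closure_image (x := (t, f)) ?_ ?_
  · unfold Prec
    exact ContinuousAt.continuousWithinAt (by fun_prop (disch := exact hden))
  · rw [closure_prod_eq, closure_Ioo (by linarith), closure_Ioo (by linarith)]
    exact ⟨ht, hf⟩

section Bounds

variable {th σt fh σf η : ℝ}

lemma UB_eq_Prec (hσt : 0 < σt) (hth : σt < th) (hσf : 0 < σf) (hfh : σf < fh)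
    (hη : η ∈ Ioo (0 : ℝ) 1) : UB th σt fh σf η = Prec η (th + σt) (fh - σf) := by
  have hden : η * (th + σt) + (1 - η) * (fh - σf) ≠ 0 := by
    nlinarith [hη.1, hη.2]
  refine (isLUB_of_mem_closure ?_ (Prec_mem_closure hσt hσf ?_ ?_ hden)).csSup_eq
    ⟨_, th, ⟨by linarith, by linarith⟩, fh, ⟨by linarith, by linarith⟩, rfl⟩
  · rintro _ ⟨t, ht, f, hf, rfl⟩
    exact Prec_le_Prec hη (by linarith [ht.1]) (by linarith) ht.2.le hf.1.le
  · exact ⟨by linarith, le_rfl⟩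
  · exact ⟨le_rfl, by linarith⟩

lemma LB_eq_Prec (hσt : 0 < σt) (hth : σt < th) (hσf : 0 < σf) (hfh : σf < fh)
    (hη : η ∈ Ioo (0 : ℝ) 1) : LB th σt fh σf η = Prec η (th - σt) (fh + σf) := by
  have hden : η * (th - σt) + (1 - η) * (fh + σf) ≠ 0 := by
    nlinarith [hη.1, hη.2]
  refine (isGLB_of_mem_closure ?_ (Prec_mem_closure hσt hσf ?_ ?_ hden)).csInf_eq
    ⟨_, th, ⟨by linarith, by linarith⟩, fh, ⟨by linarith, by linarith⟩, rfl⟩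
  · rintro _ ⟨t, ht, f, hf, rfl⟩
    exact Prec_le_Prec hη (by linarith) (by linarith [hf.1]) ht.1.le hf.2.le
  · exact ⟨le_rfl, by linarith⟩
  · exact ⟨by linarith, le_rfl⟩

end Bounds

lemma one_div_one_add_mul_sq_sub_le {k x y : ℝ} (hk : 0 ≤ k) (hx : 0 ≤ x) (hy : 0 < y)
    (hxy : x ≤ y) : 1 / (1 + k * x ^ 2) - 1 / (1 + k * y ^ 2) ≤ (y - x) / (y + x) := by
  rw [div_sub_div _ _ (by positivity) (by positivity),
    div_le_div_iff₀ (by positivity) (by positivity)]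
  nlinarith [mul_nonneg (sub_nonneg.2 hxy) (sq_nonneg (1 - k * x * y))]

lemma one_div_one_add_mul_sq_sub_eq {x y : ℝ} (hx : 0 < x) (hy : 0 < y) :
    1 / (1 + 1 / (x * y) * x ^ 2) - 1 / (1 + 1 / (x * y) * y ^ 2) = (y - x) / (y + x) := by
  field_simp
  ring

lemma one_sub_div_div_one_add_div {a b : ℝ} (hb : b ≠ 0) (hab : b + a ≠ 0) :
    (1 - a / b) / (1 + a / b) = (b - a) / (b + a) := by
  field_simp

lemma Delta_eq {th σt fh σf : ℝ} (hσt : 0 < σt) (hth : σt < th) (hσf : 0 < σf) (hfh : σf < fh) :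
    Delta th σt fh σf =
      (√((fh + σf) / (th - σt)) - √((fh - σf) / (th + σt))) /
        (√((fh + σf) / (th - σt)) + √((fh - σf) / (th + σt))) := by
  set x := √((fh - σf) / (th + σt))
  set y := √((fh + σf) / (th - σt))
  have hx : 0 < x := Real.sqrt_pos.2 (div_pos (by linarith) (by linarith))
  have hy : 0 < y := Real.sqrt_pos.2 (div_pos (by linarith) (by linarith))
  have hxy : x ≤ y := Real.sqrt_le_sqrt (div_le_div₀ (by linarith) (by linarith) (by linarith)
    (by linarith))
  have hgap : ∀ η ∈ Ioo (0 : ℝ) 1, UB th σt fh σf η - LB th σt fh σf η =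
      1 / (1 + (1 - η) / η * x ^ 2) - 1 / (1 + (1 - η) / η * y ^ 2) := by
    intro η hη
    rw [UB_eq_Prec hσt hth hσf hfh hη, LB_eq_Prec hσt hth hσf hfh hη,
      Prec_eq_one_div hη.1.ne' (by linarith), Prec_eq_one_div hη.1.ne' (by linarith),
      Real.sq_sqrt (div_nonneg (by linarith) (by linarith)),
      Real.sq_sqrt (div_nonneg (by linarith) (by linarith))]
  -- the gap is maximal at odds `(1 - η) / η = 1 / (x y)`
  have hη₀ : x * y / (1 + x * y) ∈ Ioo (0 : ℝ) 1 :=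
    ⟨by positivity, (div_lt_one (by positivity)).2 (by linarith)⟩
  have hodds : (1 - x * y / (1 + x * y)) / (x * y / (1 + x * y)) = 1 / (x * y) := by
    field_simp
    ring
  refine IsGreatest.csSup_eq ⟨⟨_, hη₀, ?_⟩, ?_⟩
  · rw [hgap _ hη₀, hodds, one_div_one_add_mul_sq_sub_eq hx hy]
  · rintro _ ⟨η, hη, rfl⟩
    rw [hgap η hη]
    exact one_div_one_add_mul_sq_sub_le (div_nonneg (by linarith [hη.2]) hη.1.le) hx.le hy hxy

/-- identity relating the coefficients of variation and the maximal
uncertainty `Δ`. -/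
theorem cv_delta_identity (th fh σt σf : ℝ)
    (hσt : 0 < σt) (hth : σt < th) (hσf : 0 < σf) (hfh : σf < fh) :
    ((1 - σf / fh) / (1 + σf / fh)) * ((1 - σt / th) / (1 + σt / th)) =
      ((1 - Delta th σt fh σf) / (1 + Delta th σt fh σf)) ^ 2 := by
  rw [Delta_eq hσt hth hσf hfh]
  set x := √((fh - σf) / (th + σt))
  set y := √((fh + σf) / (th - σt))
  have hx : 0 < x := Real.sqrt_pos.2 (div_pos (by linarith) (by linarith))
  have hy : 0 < y := Real.sqrt_pos.2 (div_pos (by linarith) (by linarith))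
  have hx2 : x ^ 2 = (fh - σf) / (th + σt) := Real.sq_sqrt (div_nonneg (by linarith) (by linarith))
  have hy2 : y ^ 2 = (fh + σf) / (th - σt) := Real.sq_sqrt (div_nonneg (by linarith) (by linarith))
  have hratio : (1 - (y - x) / (y + x)) / (1 + (y - x) / (y + x)) = x / y := by
    rw [one_sub_div_div_one_add_div (by positivity) (by linarith),
      div_eq_div_iff (by linarith) hy.ne']
    ring
  rw [hratio, div_pow, hx2, hy2, one_sub_div_div_one_add_div (by linarith) (by linarith),
    one_sub_div_div_one_add_div (by linarith) (by linarith)]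
  field_simp
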